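/- arXiv:1907.07612 — 6 statements merged into one kernel-verified Lean document; each statement's English description precedes it below -/
import Mathlib

section
/- Every flip-set F ⊆ 2^ω fails to have the Baire property in the Cantor space 2^ω. -/
open Set

/-- `F ⊆ 2^ω` is a flip-set: whenever `z` and `w` differ in exactly one
coordinate, `z ∈ F ↔ w ∉ F`. -/
def IsFlipSet (F : Set (ℕ → Bool)) : Prop :=
  ∀ z w : ℕ → Bool, (∃ n, z n ≠ w n ∧ ∀ m, m ≠ n → z m = w m) → (z ∈ F ↔ w ∉ F)

/-!
Flipping coordinate `n` is a homeomorphism of `2^ω` which maps a flip-set onto its complement,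
so it exchanges `V ∩ F` and `V \ F` for every set `V` it preserves. Every nonempty open set
contains such a `V` which is open and nonempty: a basic cylinder, flipping a coordinate it does
not constrain. If `F △ U` were meagre for an open `U`, then taking `V ⊆ U` (or `V = univ` when
`U = ∅`) one of `V \ F`, `V ∩ F` would be meagre, hence both, hence `V`, contradicting the
Baire category theorem.
-/

def flipAt (n : ℕ) (x : ℕ → Bool) : ℕ → Bool := Function.update x n (!x n)

lemma flipAt_involutive (n : ℕ) : Function.Involutive (flipAt n) := by
  intro x
  simp [flipAt]

lemma continuous_flipAt (n : ℕ) : Continuous (flipAt n) :=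
  continuous_id.update n ((continuous_of_discreteTopology (f := not)).comp (continuous_apply n))

lemma isOpenMap_flipAt (n : ℕ) : IsOpenMap (flipAt n) := fun U hU => by
  rw [(flipAt_involutive n).image_eq_preimage_symm]
  exact hU.preimage (continuous_flipAt n)

lemma IsMeagre.preimage_flipAt {s : Set (ℕ → Bool)} (hs : IsMeagre s) (n : ℕ) :
    IsMeagre (flipAt n ⁻¹' s) :=
  hs.preimage_of_isOpenMap (continuous_flipAt n) (isOpenMap_flipAt n)

lemma IsFlipSet.preimage_flipAt {F : Set (ℕ → Bool)} (hF : IsFlipSet F) (n : ℕ) :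
    flipAt n ⁻¹' F = Fᶜ := by
  ext x
  exact hF _ _ ⟨n, by simp [flipAt], fun m hm => by simp [flipAt, hm]⟩

lemma IsFlipSet.isMeagre_inter_iff_diff {F V : Set (ℕ → Bool)} (hF : IsFlipSet F) {n : ℕ}
    (hV : flipAt n ⁻¹' V = V) : IsMeagre (V ∩ F) ↔ IsMeagre (V \ F) := by
  have hVF : flipAt n ⁻¹' (V ∩ F) = V \ F := by
    rw [preimage_inter, hV, hF.preimage_flipAt, sdiff_eq]
  have hVFc : flipAt n ⁻¹' (V \ F) = V ∩ F := by
    rw [preimage_sdiff, hV, hF.preimage_flipAt, sdiff_compl]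
  exact ⟨fun h => hVF ▸ h.preimage_flipAt n, fun h => hVFc ▸ h.preimage_flipAt n⟩

lemma IsFlipSet.not_isMeagre_inter {F V : Set (ℕ → Bool)} (hF : IsFlipSet F) (hVo : IsOpen V)
    (hVne : V.Nonempty) {n : ℕ} (hV : flipAt n ⁻¹' V = V) : ¬ IsMeagre (V ∩ F) := by
  intro hVF
  have hV : IsMeagre V := by
    simpa only [inter_union_sdiff] using hVF.union ((hF.isMeagre_inter_iff_diff hV).1 hVF)
  exact not_isMeagre_of_isOpen hVo hVne hV

lemma IsFlipSet.not_isMeagre_diff {F V : Set (ℕ → Bool)} (hF : IsFlipSet F) (hVo : IsOpen V)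
    (hVne : V.Nonempty) {n : ℕ} (hV : flipAt n ⁻¹' V = V) : ¬ IsMeagre (V \ F) :=
  (hF.isMeagre_inter_iff_diff hV).not.1 (hF.not_isMeagre_inter hVo hVne hV)

lemma IsOpen.exists_flipAt_invariant_subset {U : Set (ℕ → Bool)} (hU : IsOpen U)
    (hne : U.Nonempty) :
    ∃ V ⊆ U, IsOpen V ∧ V.Nonempty ∧ ∃ n, flipAt n ⁻¹' V = V := by
  obtain ⟨x, hx⟩ := hne
  obtain ⟨I, u, hu, hIU⟩ := isOpen_pi_iff.1 hU x hx
  obtain ⟨n, hn⟩ := I.exists_notMem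
  refine ⟨(I : Set ℕ).pi fun i => {x i}, ?_, ?_, ⟨x, fun i _ => rfl⟩, n, ?_⟩
  · exact (pi_mono fun i hi => singleton_subset_iff.2 (hu i hi).2).trans hIU
  · exact isOpen_set_pi I.finite_toSet fun i _ => isOpen_discrete _
  · ext y
    refine forall₂_congr fun i hi => ?_
    have hin : i ≠ n := ne_of_mem_of_not_mem hi hn
    simp [flipAt, hin]

/-- Every flip-set fails to have the Baire property in the
Cantor space `2^ω`: there is no open set `U` such that `F △ U` is meager. -/
theorem stmt1 (F : Set (ℕ → Bool)) (hF : IsFlipSet F) :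
    ¬ ∃ U : Set (ℕ → Bool), IsOpen U ∧ IsMeagre (symmDiff F U) := by
  rintro ⟨U, hU, hM⟩
  rcases U.eq_empty_or_nonempty with rfl | hne
  · refine hF.not_isMeagre_inter isOpen_univ univ_nonempty (n := 0) rfl ?_
    rwa [univ_inter, ← symmDiff_bot F]
  · obtain ⟨V, hVU, hVo, hVne, n, hV⟩ := hU.exists_flipAt_invariant_subset hne
    exact hF.not_isMeagre_diff hVo hVne hV
      (hM.mono fun y ⟨hyV, hyF⟩ => Or.inr ⟨hVU hyV, hyF⟩)
end

section
/- Let Z, W, T be topological spaces and ξ, η < ω₁ countable ordinals. If f : Z → W is Σ⁰_{1+ξ}-measurable and g : W → T is Σ⁰_{1+η}-measurable, then g ∘ f is Σ⁰_{1+ξ+η}-measurable. -/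
open Set

/-- The additive Borel classes `Σ⁰_ξ`: `Σ⁰_1` is the open sets, and for larger `ξ`
a set is in `Σ⁰_ξ` iff it is open or a countable union of complements of sets in
lower classes `Σ⁰_{ξₙ}` with `1 ≤ ξₙ < ξ`. -/
def Sigma0 (Z : Type*) [TopologicalSpace Z] (ξ : Ordinal.{0}) : Set (Set Z) :=
  {A | IsOpen A ∨ ∃ g : ℕ → Set Z, ∃ o : ℕ → {o : Ordinal.{0} // 1 ≤ o ∧ o < ξ},
      (∀ n, g n ∈ Sigma0 Z (o n).1) ∧ A = ⋃ n, (g n)ᶜ}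
termination_by ξ
decreasing_by exact (o n).2.2

/-- `f : Z → W` is `Σ⁰_α`-measurable if preimages of open sets are `Σ⁰_α`. -/
def Sigma0Measurable {Z W : Type*} [TopologicalSpace Z] [TopologicalSpace W]
    (α : Ordinal.{0}) (f : Z → W) : Prop :=
  ∀ U : Set W, IsOpen U → f ⁻¹' U ∈ Sigma0 Z α

lemma Sigma0_mono {Z : Type*} [TopologicalSpace Z] {α β : Ordinal.{0}} (h : α ≤ β) :
    Sigma0 Z α ⊆ Sigma0 Z β := by
  intro A hA
  rw [Sigma0] at hA ⊢
  rcases hA with hopen | ⟨g, o, hg, rfl⟩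
  · exact Or.inl hopen
  · exact Or.inr ⟨g, fun n => ⟨(o n).1, (o n).2.1, (o n).2.2.trans_le h⟩, hg, rfl⟩

/-- Each lower index `o ≥ 1` of `Σ⁰_{1+η}` is `1 + (o - 1)` with `o - 1 < η`, so by induction the
preimage of a set from that level lies in `Σ⁰_{α + (o - 1)}`, and `α + (o - 1) < α + η`. -/
lemma Sigma0Measurable.preimage_mem_Sigma0 {Z W : Type*} [TopologicalSpace Z]
    [TopologicalSpace W] {α : Ordinal.{0}} (hα : 1 ≤ α) {f : Z → W}
    (hf : Sigma0Measurable α f) (η : Ordinal.{0}) {A : Set W} (hA : A ∈ Sigma0 W (1 + η)) :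
    f ⁻¹' A ∈ Sigma0 Z (α + η) := by
  induction η using WellFoundedLT.induction generalizing A with
  | ind η ih =>
    rw [Sigma0] at hA
    rcases hA with hopen | ⟨s, o, hs, rfl⟩
    · exact Sigma0_mono le_self_add (hf A hopen)
    · have hshift : ∀ n, 1 + ((o n).1 - 1) = (o n).1 := fun n =>
        Ordinal.add_sub_cancel_of_le (o n).2.1
      have hlt : ∀ n, (o n).1 - 1 < η := fun n => by
        have := (o n).2.2
        rwa [← hshift n, add_lt_add_iff_left] at this
      rw [Sigma0, preimage_iUnion]
      refine Or.inr ⟨fun n => f ⁻¹' s n,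
        fun n => ⟨α + ((o n).1 - 1), hα.trans le_self_add,
          (add_lt_add_iff_left α).mpr (hlt n)⟩, fun n => ?_, rfl⟩
      exact ih _ (hlt n) (by rw [hshift n]; exact hs n)

lemma Sigma0Measurable.comp {Z W T : Type*} [TopologicalSpace Z] [TopologicalSpace W]
    [TopologicalSpace T] {α η : Ordinal.{0}} (hα : 1 ≤ α) {f : Z → W} {g : W → T}
    (hg : Sigma0Measurable (1 + η) g) (hf : Sigma0Measurable α f) :
    Sigma0Measurable (α + η) (g ∘ f) :=
  fun U hU => hf.preimage_mem_Sigma0 hα η (hg U hU)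

theorem stmt7_general {Z W T : Type*} [TopologicalSpace Z] [TopologicalSpace W]
    [TopologicalSpace T] (ξ η : Ordinal.{0})
    (f : Z → W) (g : W → T)
    (hf : Sigma0Measurable (1 + ξ) f) (hg : Sigma0Measurable (1 + η) g) :
    Sigma0Measurable (1 + ξ + η) (g ∘ f) :=
  hg.comp le_self_add hf

/-- If `f : Z → W` is `Σ⁰_{1+ξ}`-measurable and `g : W → T` is
`Σ⁰_{1+η}`-measurable, where `ξ, η < ω₁`, then `g ∘ f` is
`Σ⁰_{1+ξ+η}`-measurable. -/
theorem stmt7 {Z W T : Type*} [TopologicalSpace Z] [TopologicalSpace W]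
    [TopologicalSpace T] (ξ η : Ordinal.{0})
    (hξc : ξ.card ≤ Cardinal.aleph0) (hηc : η.card ≤ Cardinal.aleph0)
    (f : Z → W) (g : W → T)
    (hf : Sigma0Measurable (1 + ξ) f) (hg : Sigma0Measurable (1 + η) g) :
    Sigma0Measurable (1 + ξ + η) (g ∘ f) :=
  stmt7_general ξ η f g hf hg
end

section
/- Let Z be a space and D ⊆ 𝒫(ω). Then there exists a 2^ω-universal set for Γ_D(Z), i.e., a set V ⊆ 2^ω × Z with V ∈ Γ_D(2^ω × Z) and {V_x : x ∈ 2^ω} = Γ_D(Z). -/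
open Set

/-- The Hausdorff operation `H_D` applied to a sequence of subsets of `Z`. -/
def HausOp {Z : Type*} (D : Set (Set ℕ)) (A : ℕ → Set Z) : Set Z :=
  {x | {n | x ∈ A n} ∈ D}

/-- `Γ_D(Z)`: the results of the Hausdorff operation `H_D` applied to
sequences of open subsets of `Z`. -/
def GammaD (Z : Type*) [TopologicalSpace Z] (D : Set (Set ℕ)) : Set (Set Z) :=
  {A | ∃ g : ℕ → Set Z, (∀ n, IsOpen (g n)) ∧ A = HausOp D g}

/-!
Fix an enumeration `(B m)` of a countable base of `Z`. A point `c ∈ 2^ω` codes the open set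
`⋃ {B m | c m = true}`, and every open set has such a code; the set of pairs `(c, y)` with `y` in
the set coded by `c` is therefore an open `2^ω`-universal set `U` for the open subsets of `Z`.
Splitting `x ∈ 2^ω` into the slices `xₙ = (m ↦ x ⟨n, m⟩)` gives continuous maps whose joint map
`x ↦ (xₙ)ₙ` is onto `(2^ω)^ω`. Each `Wₙ = {(x, y) | (xₙ, y) ∈ U}` is open, the section of `H_D(W)`
at `x` is `H_D(U_{x₀}, U_{x₁}, …)`, and every sequence of open sets arises as `(U_{xₙ})ₙ`.
-/

open Function TopologicalSpace

def verticalSections {X Z : Type*} (V : Set (X × Z)) : Set (Set Z) :=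
  {S | ∃ x, S = Prod.mk x ⁻¹' V}

theorem secondCountableTopology_of_separableSpace (Z : Type*) [TopologicalSpace Z]
    [PseudoMetrizableSpace Z] [SeparableSpace Z] : SecondCountableTopology Z := by
  let := pseudoMetrizableSpaceUniformity Z
  have := pseudoMetrizableSpaceUniformity_countably_generated Z
  exact UniformSpace.secondCountable_of_separable Z

theorem exists_seq_isOpen_basis (Z : Type*) [TopologicalSpace Z] [SecondCountableTopology Z] :
    ∃ B : ℕ → Set Z, (∀ m, IsOpen (B m)) ∧
      ∀ U, IsOpen U → ∀ y ∈ U, ∃ m, y ∈ B m ∧ B m ⊆ U := by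
  obtain ⟨C, hCc, -, hC⟩ := exists_countable_basis Z
  -- `∅` is added only to make the family nonempty, so that it can be enumerated by `ℕ`.
  obtain ⟨B, hB⟩ := (hCc.insert ∅).exists_eq_range (insert_nonempty ∅ C)
  refine ⟨B, fun m => ?_, fun U hU y hy => ?_⟩
  · rcases (hB ▸ mem_range_self m : B m ∈ insert ∅ C) with h | h
    · exact h ▸ isOpen_empty
    · exact hC.isOpen h
  · obtain ⟨s, hsC, hys, hsU⟩ := hC.exists_subset_of_mem_open hy hU
    obtain ⟨m, rfl⟩ : s ∈ range B := hB ▸ mem_insert_of_mem ∅ hsC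
    exact ⟨m, hys, hsU⟩

section CodedUnion

variable {Z : Type*} [TopologicalSpace Z] {B : ℕ → Set Z}

def codedUnion (B : ℕ → Set Z) : Set ((ℕ → Bool) × Z) :=
  {p | ∃ m, p.1 m = true ∧ p.2 ∈ B m}

theorem isOpen_codedUnion (hB : ∀ m, IsOpen (B m)) : IsOpen (codedUnion B) := by
  have : codedUnion B = ⋃ m, {c : ℕ → Bool | c m = true} ×ˢ B m := by
    ext p
    simp [codedUnion]
  rw [this]
  exact isOpen_iUnion fun m =>
    ((isOpen_discrete {true}).preimage (continuous_apply (A := fun _ : ℕ => Bool) m)).prod (hB m)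

theorem verticalSections_codedUnion (hB : ∀ m, IsOpen (B m))
    (hbasis : ∀ U, IsOpen U → ∀ y ∈ U, ∃ m, y ∈ B m ∧ B m ⊆ U) :
    verticalSections (codedUnion B) = {S | IsOpen S} := by
  classical
  ext S
  constructor
  · rintro ⟨c, rfl⟩
    have : Prod.mk c ⁻¹' codedUnion B = ⋃ m ∈ {m | c m = true}, B m := by
      ext y
      simp [codedUnion]
    exact this ▸ isOpen_biUnion fun m _ => hB m
  · intro hS
    refine ⟨fun m => decide (B m ⊆ S), Set.ext fun y => ⟨fun hy => ?_, ?_⟩⟩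
    · obtain ⟨m, hym, hmS⟩ := hbasis S hS y hy
      exact ⟨m, decide_eq_true hmS, hym⟩
    · rintro ⟨m, hmS, hym⟩
      exact of_decide_eq_true hmS hym

end CodedUnion

theorem exists_isOpen_verticalSections_eq_setOf_isOpen (Z : Type*) [TopologicalSpace Z]
    [SecondCountableTopology Z] :
    ∃ U : Set ((ℕ → Bool) × Z), IsOpen U ∧ verticalSections U = {S | IsOpen S} := by
  obtain ⟨B, hB, hbasis⟩ := exists_seq_isOpen_basis Z
  exact ⟨codedUnion B, isOpen_codedUnion hB, verticalSections_codedUnion hB hbasis⟩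

section HausOp

variable {X Y Z : Type*} [TopologicalSpace Z] {U : Set (Y × Z)} {π : ℕ → X → Y}

theorem hausOp_preimage_mem_gammaD [TopologicalSpace X] [TopologicalSpace Y] (D : Set (Set ℕ))
    (hU : IsOpen U) (hπ : ∀ n, Continuous (π n)) :
    HausOp D (fun n => Prod.map (π n) id ⁻¹' U) ∈ GammaD (X × Z) D :=
  ⟨_, fun n => hU.preimage ((hπ n).prodMap continuous_id), rfl⟩

theorem verticalSections_hausOp_preimage (D : Set (Set ℕ))
    (hU : verticalSections U = {S | IsOpen S}) (hπ : Surjective fun x n => π n x) :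
    verticalSections (HausOp D (fun n => Prod.map (π n) id ⁻¹' U)) = GammaD Z D := by
  ext S
  constructor
  · rintro ⟨x, rfl⟩
    refine ⟨fun n => Prod.mk (π n x) ⁻¹' U, fun n => ?_, rfl⟩
    exact (hU.subset ⟨π n x, rfl⟩ : IsOpen _)
  · rintro ⟨g, hg, rfl⟩
    choose c hc using fun n => (hU.symm.subset (hg n) : g n ∈ verticalSections U)
    obtain rfl : g = fun n => Prod.mk (c n) ⁻¹' U := funext hc
    obtain ⟨x, rfl⟩ := hπ c
    exact ⟨x, rfl⟩

end HausOp

def cantorSlice (n : ℕ) (x : ℕ → Bool) : ℕ → Bool :=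
  fun m => x (Nat.pair n m)

theorem continuous_cantorSlice (n : ℕ) : Continuous (cantorSlice n) :=
  continuous_pi fun m => continuous_apply (Nat.pair n m)

theorem surjective_cantorSlice : Surjective fun x n => cantorSlice n x :=
  fun c => ⟨fun k => c k.unpair.1 k.unpair.2, by ext n m; simp [cantorSlice]⟩

/-- For every separable metrizable space `Z` and `D ⊆ 𝒫(ω)`
there exists a `2^ω`-universal set for `Γ_D(Z)`: a set
`V ∈ Γ_D(2^ω × Z)` whose vertical sections are exactly the members of
`Γ_D(Z)`. -/
theorem stmt9 (Z : Type*) [TopologicalSpace Z]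
    [TopologicalSpace.MetrizableSpace Z] [TopologicalSpace.SeparableSpace Z]
    (D : Set (Set ℕ)) :
    ∃ V : Set ((ℕ → Bool) × Z), V ∈ GammaD ((ℕ → Bool) × Z) D ∧
      {S : Set Z | ∃ x : ℕ → Bool, S = {y | (x, y) ∈ V}} = GammaD Z D := by
  have := secondCountableTopology_of_separableSpace Z
  obtain ⟨U, hU, hUsections⟩ := exists_isOpen_verticalSections_eq_setOf_isOpen Z
  exact ⟨_, hausOp_preimage_mem_gammaD D hU continuous_cantorSlice,
    verticalSections_hausOp_preimage D hUsections surjective_cantorSlice⟩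
end

section
/- Let Z be a space, 1 ≤ η < ω₁, and Δ, Γ ⊆ 𝒫(Z). Then the dual of SD_η(Δ, Γ) equals SD_η(dual of Δ, dual of Γ). That is, {Z \ A : A ∈ SD_η(Δ, Γ)} = SD_η({Z \ A : A ∈ Δ}, {Z \ A : A ∈ Γ}). -/
open Set

/-- Louveau's separated difference operation
`SD_η((V_{ξ,n}), (A_{ξ,n}), A*)`. -/
def SDop {Z : Type*} (η : Ordinal.{0}) (V A : Ordinal.{0} → ℕ → Set Z)
    (Astar : Set Z) : Set Z :=
  (⋃ ξ : Ordinal.{0}, ⋃ (_ : ξ < η), ⋃ n : ℕ,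
      (A ξ n ∩ (V ξ n \ ⋃ ξ' : Ordinal.{0}, ⋃ (_ : ξ' < ξ), ⋃ m : ℕ, V ξ' m)))
    ∪ (Astar \ ⋃ ξ : Ordinal.{0}, ⋃ (_ : ξ < η), ⋃ n : ℕ, V ξ n)

/-- The class `SD_η(Δ, Γ*)` of separated differences: all sets
`SD_η((V_{ξ,n}), (A_{ξ,n}), A*)` where the `V_{ξ,n}` are open and pairwise
disjoint for fixed `ξ`, each `A_{ξ,n} ∈ Δ`, and `A* ∈ Γ*`. -/
def SDclass (Z : Type*) [TopologicalSpace Z] (η : Ordinal.{0})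
    (Δ Γ : Set (Set Z)) : Set (Set Z) :=
  {B | ∃ (V A : Ordinal.{0} → ℕ → Set Z) (Astar : Set Z),
      (∀ ξ < η, ∀ n : ℕ, IsOpen (V ξ n)) ∧
      (∀ ξ < η, ∀ m n : ℕ, m ≠ n → Disjoint (V ξ m) (V ξ n)) ∧
      (∀ ξ < η, ∀ n : ℕ, A ξ n ∈ Δ) ∧ Astar ∈ Γ ∧ B = SDop η V A Astar}

/-!
The sets `V ξ n \ ⋃_{ξ' < ξ, m} V ξ' m` (for `ξ < η`) are pairwise disjoint: a point of
`⋃ V` lies in the piece indexed by the least `ξ` with `z ∈ ⋃ₙ V ξ n` and the unique such `n`.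
So `SD_η((V), (A), A*)` is the set that agrees with `A ξ n` on the piece `(ξ, n)` and with `A*`
off `⋃ V`, and its complement is obtained by complementing every `A ξ n` and `A*` while
keeping the same `V`.
-/

section SDop

variable {Z : Type*} {η : Ordinal.{0}} {V A : Ordinal.{0} → ℕ → Set Z} {Astar : Set Z} {z : Z}

lemma mem_SDop_iff_of_mem (hd : ∀ ξ < η, ∀ m n : ℕ, m ≠ n → Disjoint (V ξ m) (V ξ n))
    {ξ₀ : Ordinal.{0}} {n₀ : ℕ} (hξ₀ : ξ₀ < η) (hz : z ∈ V ξ₀ n₀)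
    (hfirst : ∀ ξ < ξ₀, ∀ m, z ∉ V ξ m) :
    z ∈ SDop η V A Astar ↔ z ∈ A ξ₀ n₀ := by
  simp only [SDop, mem_union, mem_iUnion, mem_inter_iff, mem_sdiff, not_exists]
  constructor
  · rintro (⟨ξ, hξ, n, hA, hV, hprev⟩ | ⟨-, hout⟩)
    · obtain rfl : ξ = ξ₀ :=
        le_antisymm (not_lt.1 fun h => hprev ξ₀ h n₀ hz) (not_lt.1 fun h => hfirst ξ h n hV)
      obtain rfl : n = n₀ := by
        by_contra hne
        exact (hd ξ hξ n n₀ hne).le_bot ⟨hV, hz⟩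
      exact hA
    · exact (hout ξ₀ hξ₀ n₀ hz).elim
  · exact fun hA => Or.inl ⟨ξ₀, hξ₀, n₀, hA, hz, hfirst⟩

lemma mem_SDop_iff_of_forall_notMem (hz : ∀ ξ < η, ∀ n, z ∉ V ξ n) :
    z ∈ SDop η V A Astar ↔ z ∈ Astar := by
  simp only [SDop, mem_union, mem_iUnion, mem_inter_iff, mem_sdiff, not_exists]
  constructor
  · rintro (⟨ξ, hξ, n, -, hV, -⟩ | ⟨hA, -⟩)
    · exact (hz ξ hξ n hV).elim
    · exact hA
  · exact fun hA => Or.inr ⟨hA, hz⟩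

lemma compl_SDop (hd : ∀ ξ < η, ∀ m n : ℕ, m ≠ n → Disjoint (V ξ m) (V ξ n)) :
    (SDop η V A Astar)ᶜ = SDop η V (fun ξ n => (A ξ n)ᶜ) Astarᶜ := by
  ext z
  rw [mem_compl_iff]
  by_cases hU : ∃ ξ, ξ < η ∧ ∃ n, z ∈ V ξ n
  · obtain ⟨ξ₀, ⟨hξ₀, n₀, hz⟩, hmin⟩ := wellFounded_lt.has_min _ hU
    have hfirst : ∀ ξ < ξ₀, ∀ m, z ∉ V ξ m := fun ξ hξ m hm =>
      hmin ξ ⟨hξ.trans hξ₀, m, hm⟩ hξ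
    rw [mem_SDop_iff_of_mem hd hξ₀ hz hfirst, mem_SDop_iff_of_mem hd hξ₀ hz hfirst]
    rfl
  · push Not at hU
    rw [mem_SDop_iff_of_forall_notMem hU, mem_SDop_iff_of_forall_notMem hU]
    rfl

end SDop

lemma compl_image_SDclass_subset {Z : Type*} [TopologicalSpace Z] (η : Ordinal.{0})
    (Δ Γ : Set (Set Z)) :
    compl '' SDclass Z η Δ Γ ⊆ SDclass Z η (compl '' Δ) (compl '' Γ) := by
  rintro _ ⟨_, ⟨V, A, Astar, hV, hd, hA, hAstar, rfl⟩, rfl⟩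
  exact ⟨V, fun ξ n => (A ξ n)ᶜ, Astarᶜ, hV, hd, fun ξ hξ n => mem_image_of_mem _ (hA ξ hξ n),
    mem_image_of_mem _ hAstar, compl_SDop hd⟩

theorem stmt14_general {Z : Type*} [TopologicalSpace Z] (η : Ordinal.{0})
    (Δ Γ : Set (Set Z)) :
    compl '' SDclass Z η Δ Γ = SDclass Z η (compl '' Δ) (compl '' Γ) := by
  refine (compl_image_SDclass_subset η Δ Γ).antisymm ?_
  have hdual := compl_image_SDclass_subset η (compl '' Δ) (compl '' Γ)
  rw [compl_compl_image, compl_compl_image] at hdual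
  calc SDclass Z η (compl '' Δ) (compl '' Γ)
      = compl '' (compl '' SDclass Z η (compl '' Δ) (compl '' Γ)) := (compl_compl_image _).symm
    _ ⊆ compl '' SDclass Z η Δ Γ := image_mono hdual

/-- For `1 ≤ η < ω₁`, the dual of `SD_η(Δ, Γ)` is
`SD_η(Δ̌, Γ̌)`:  `{Z \ A : A ∈ SD_η(Δ, Γ)} = SD_η({Z \ A : A ∈ Δ}, {Z \ A : A ∈ Γ})`. -/
theorem stmt14 {Z : Type*} [TopologicalSpace Z] (η : Ordinal.{0})
    (hη1 : 1 ≤ η) (hηc : η.card ≤ Cardinal.aleph0) (Δ Γ : Set (Set Z)) :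
    compl '' SDclass Z η Δ Γ = SDclass Z η (compl '' Δ) (compl '' Γ) :=
  stmt14_general η Δ Γ
end

section
/- Let Z be a zero-dimensional Polish space and let A ⊆ Z with A ∉ Δ⁰_1(Z) be selfdual (i.e., A ≤ Z \ A). Suppose V ⊆ Z is clopen and V ∉ I(A), where I(A) is the collection of clopen sets that admit a clopen partition into pieces U with U ∩ A < A. Then V ∩ A ≤ V \ A in the space V. -/
open Set

/-- Wadge reduction in a space `Z`: `A ≤ B` iff `A = f⁻¹[B]` for some
continuous `f : Z → Z`. -/
def WadgeLe {Z : Type*} [TopologicalSpace Z] (A B : Set Z) : Prop :=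
  ∃ f : Z → Z, Continuous f ∧ A = f ⁻¹' B

/-- Strict Wadge reduction. -/
def WadgeLt {Z : Type*} [TopologicalSpace Z] (A B : Set Z) : Prop :=
  WadgeLe A B ∧ ¬ WadgeLe B A

/-- A space is zero-dimensional if it is non-empty and has a base of clopen
sets. -/
def ZeroDimensional (Z : Type*) [t : TopologicalSpace Z] : Prop :=
  Nonempty Z ∧ ∃ b : Set (Set Z), (∀ s ∈ b, IsClopen s) ∧
    TopologicalSpace.IsTopologicalBasis b

/-- `V ∈ I(A)`: the clopen set `V` admits a partition into clopen pieces `U`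
with `U ∩ A < A`. -/
def MemIdealI {Z : Type*} [TopologicalSpace Z] (A V : Set Z) : Prop :=
  ∃ 𝒰 : Set (Set Z), (∀ U ∈ 𝒰, IsClopen U) ∧ (∀ U ∈ 𝒰, U ⊆ V) ∧
    (∀ U ∈ 𝒰, U.Nonempty) ∧ (∀ U ∈ 𝒰, ∀ U' ∈ 𝒰, U ≠ U' → Disjoint U U') ∧
    ⋃₀ 𝒰 = V ∧ ∀ U ∈ 𝒰, WadgeLt (U ∩ A) A

/-!
Since `V ∉ I(A)`, the one-piece partition `{V}` does not witness `V ∈ I(A)`, so `V ∩ A ≮ A`;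
as `V ∩ A ≤ A` holds for every clopen `V`, we get `A ≤ V ∩ A`. Selfduality then gives
`A ≤ Aᶜ ≤ Z \ (V ∩ A)`. Finally, the retraction of `Z` onto `V` that collapses `Z \ V` to a
point of `V \ A` (which exists because `A` is not clopen) pulls `V \ A` back to `Z \ (V ∩ A)`,
and composing yields `V ∩ A ≤ V \ A` inside `V`.
-/

section Wadge

variable {Z : Type*} [TopologicalSpace Z] {A B C V : Set Z}

theorem WadgeLe.trans (hAB : WadgeLe A B) (hBC : WadgeLe B C) : WadgeLe A C := by
  obtain ⟨f, hf, rfl⟩ := hAB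
  obtain ⟨g, hg, rfl⟩ := hBC
  exact ⟨g ∘ f, hg.comp hf, rfl⟩

theorem WadgeLe.compl (h : WadgeLe A B) : WadgeLe Aᶜ Bᶜ := by
  obtain ⟨f, hf, rfl⟩ := h
  exact ⟨f, hf, rfl⟩

theorem WadgeLe.isClopen (h : WadgeLe A B) (hB : IsClopen B) : IsClopen A := by
  obtain ⟨f, hf, rfl⟩ := h
  exact hB.preimage hf

theorem IsClopen.continuous_piecewise_const {Y : Type*} [TopologicalSpace Y]
    [DecidablePred (· ∈ V)] (hV : IsClopen V) {f : Z → Y} (hf : Continuous f) (y : Y) :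
    Continuous (V.piecewise f fun _ => y) :=
  hf.piecewise (by simp [hV.frontier_eq]) continuous_const

theorem wadgeLe_inter_of_isClopen (hV : IsClopen V) (hA : A ≠ univ) : WadgeLe (V ∩ A) A := by
  classical
  obtain ⟨z₀, hz₀⟩ := (ne_univ_iff_exists_notMem A).1 hA
  refine ⟨V.piecewise id fun _ => z₀, hV.continuous_piecewise_const continuous_id z₀, ?_⟩
  ext z
  by_cases hz : z ∈ V <;> simp [hz, hz₀]

theorem MemIdealI.of_eq_empty (hV : V = ∅) : MemIdealI A V :=
  ⟨∅, by simp, by simp, by simp, by simp, by simp [hV], by simp⟩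

theorem MemIdealI.of_wadgeLt (hV : IsClopen V) (hne : V.Nonempty) (h : WadgeLt (V ∩ A) A) :
    MemIdealI A V :=
  ⟨{V}, by simp [hV], by simp, by simp [hne], by simp, by simp, by simp [h]⟩

theorem wadgeLe_inter_of_not_memIdealI (hV : IsClopen V) (hA : A ≠ univ)
    (hVI : ¬ MemIdealI A V) : WadgeLe A (V ∩ A) := by
  have hne : V.Nonempty := nonempty_iff_ne_empty.2 fun h => hVI (.of_eq_empty h)
  by_contra h
  exact hVI (.of_wadgeLt hV hne ⟨wadgeLe_inter_of_isClopen hV hA, h⟩)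

theorem nonempty_diff_of_wadgeLe_inter (hV : IsClopen V) (hA : ¬ IsClopen A)
    (h : WadgeLe A (V ∩ A)) : (V \ A).Nonempty := by
  rw [nonempty_iff_ne_empty, Ne, sdiff_eq_empty]
  intro hVA
  rw [inter_eq_left.2 hVA] at h
  exact hA (h.isClopen hV)

theorem exists_continuous_retraction_preimage_diff (hV : IsClopen V) {b : Z} (hb : b ∈ V \ A) :
    ∃ r : Z → V, Continuous r ∧ r ⁻¹' (((↑) : V → Z) ⁻¹' (V \ A)) = (V ∩ A)ᶜ := by
  classical
  have hmaps : ∀ z, V.piecewise id (fun _ => b) z ∈ V := fun z => by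
    by_cases hz : z ∈ V <;> simp [hz, hb.1]
  refine ⟨codRestrict _ V hmaps, (hV.continuous_piecewise_const continuous_id b).codRestrict _, ?_⟩
  ext z
  by_cases hz : z ∈ V <;> simp [hz, hb.2]

theorem exists_continuous_subtype_preimage_diff (hV : IsClopen V) {b : Z} (hb : b ∈ V \ A)
    (h : WadgeLe A (V ∩ A)ᶜ) :
    ∃ f : V → V, Continuous f ∧
      (((↑) : V → Z) ⁻¹' A) = f ⁻¹' (((↑) : V → Z) ⁻¹' (V \ A)) := by
  obtain ⟨r, hr, hrV⟩ := exists_continuous_retraction_preimage_diff hV hb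
  obtain ⟨k, hk, hkA⟩ := h
  refine ⟨r ∘ k ∘ (↑), hr.comp (hk.comp continuous_subtype_val), ?_⟩
  rw [preimage_comp, preimage_comp, hrV, ← hkA]

end Wadge

theorem stmt18_general {Z : Type*} [TopologicalSpace Z]
    (A : Set Z) (hsd : WadgeLe A Aᶜ)
    (hA : ¬ IsClopen A) (V : Set Z) (hV : IsClopen V) (hVI : ¬ MemIdealI A V) :
    ∃ f : V → V, Continuous f ∧
      (((↑) : V → Z) ⁻¹' A) = f ⁻¹' (((↑) : V → Z) ⁻¹' (V \ A)) := by
  have hAu : A ≠ univ := fun h => hA (h ▸ isClopen_univ)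
  have hle : WadgeLe A (V ∩ A) := wadgeLe_inter_of_not_memIdealI hV hAu hVI
  obtain ⟨b, hb⟩ := nonempty_diff_of_wadgeLe_inter hV hA hle
  exact exists_continuous_subtype_preimage_diff hV hb (hsd.trans hle.compl)

/-- Let `Z` be a zero-dimensional Polish space and `A ⊆ Z` a
selfdual set which is not clopen. If `V` is clopen and `V ∉ I(A)`, then
`V ∩ A ≤ V \ A` in the space `V`. -/
theorem stmt18 {Z : Type*} [TopologicalSpace Z] [PolishSpace Z]
    (hzd : ZeroDimensional Z) (A : Set Z) (hsd : WadgeLe A Aᶜ)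
    (hA : ¬ IsClopen A) (V : Set Z) (hV : IsClopen V) (hVI : ¬ MemIdealI A V) :
    ∃ f : V → V, Continuous f ∧
      (((↑) : V → Z) ⁻¹' A) = f ⁻¹' (((↑) : V → Z) ⁻¹' (V \ A)) :=
  stmt18_general A hsd hA V hV hVI
end

section
/- Let Z be a zero-dimensional Polish space on which the Wadge-reduction relation is well-founded and satisfies Wadge's Lemma (for any A, B in the relevant class, A ≤ B or Z \ B ≤ A). Suppose A ⊆ Z and 𝒰 is an open cover of Z such that A ∩ U < A in Z for every U ∈ 𝒰. Then A is selfdual, i.e., Z \ A ≤ A. -/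
/-!
By Wadge's Lemma, `A ∩ U < A` forces `(A ∩ U)ᶜ ≤ A` for every `U ∈ 𝒰`, and on `U` the set
`(A ∩ U)ᶜ` agrees with `Aᶜ`. Zero-dimensionality and second countability refine `𝒰` to a countable
partition of `Z` into clopen pieces, each inside some `U ∈ 𝒰`; gluing the reductions chosen on the
pieces gives a continuous reduction of `Aᶜ` to `A`.
-/

open Set

open TopologicalSpace Function

section

variable {Z : Type*} [TopologicalSpace Z]

theorem exists_clopen_seq_cover_subordinate [SecondCountableTopology Z] [Nonempty Z]
    {b : Set (Set Z)} (hb_clopen : ∀ s ∈ b, IsClopen s) (hb : IsTopologicalBasis b)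
    {𝒰 : Set (Set Z)} (hopen : ∀ U ∈ 𝒰, IsOpen U) (hcover : ⋃₀ 𝒰 = univ) :
    ∃ V : ℕ → Set Z, (∀ n, IsClopen (V n)) ∧ (∀ n, ∃ U ∈ 𝒰, V n ⊆ U) ∧ ⋃ n, V n = univ := by
  set S : Set (Set Z) := {V | V ∈ b ∧ ∃ U ∈ 𝒰, V ⊆ U}
  have hS : ⋃₀ S = univ := by
    refine eq_univ_of_forall fun x => ?_
    obtain ⟨U, hU, hxU⟩ := mem_sUnion.1 (hcover ▸ mem_univ x)
    obtain ⟨V, hVb, hxV, hVU⟩ := hb.exists_subset_of_mem_open hxU (hopen U hU)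
    exact ⟨V, ⟨hVb, U, hU, hVU⟩, hxV⟩
  obtain ⟨T, hTc, hTS, hT⟩ := isOpen_sUnion_countable S fun V hV => (hb_clopen V hV.1).isOpen
  rw [hS] at hT
  obtain ⟨V, rfl⟩ := hTc.exists_eq_range (Nonempty.of_sUnion_eq_univ hT)
  exact ⟨V, fun n => hb_clopen _ (hTS (mem_range_self n)).1,
    fun n => (hTS (mem_range_self n)).2, by rwa [sUnion_range] at hT⟩

theorem isOpen_disjointed_of_isClopen {V : ℕ → Set Z} (hV : ∀ n, IsClopen (V n)) (n : ℕ) :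
    IsOpen (disjointed V n) := by
  rw [disjointed_eq_inter_compl]
  exact (hV n).isOpen.inter <| (finite_Iio n).isOpen_biInter fun j _ => (hV j).compl.isOpen

theorem wadgeLe_of_disjoint_open_cover {ι : Type*} {C B : Set Z} {D : ι → Set Z}
    (hD : ∀ i, IsOpen (D i)) (hdisj : Pairwise (Disjoint on D)) (hcov : ⋃ i, D i = univ)
    (hred : ∀ i, ∃ f : Z → Z, Continuous f ∧ ∀ x ∈ D i, x ∈ C ↔ f x ∈ B) :
    WadgeLe C B := by
  choose f hf_cont hf_red using hred
  choose idx hidx using fun x => mem_iUnion.1 (hcov ▸ mem_univ x)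
  have idx_eq : ∀ {i x}, x ∈ D i → idx x = i := fun {i x} hx =>
    hdisj.eq <| not_disjoint_iff.2 ⟨x, hidx x, hx⟩
  refine ⟨fun x => f (idx x) x, ?_, ?_⟩
  · refine continuous_of_cover_nhds (s := D) (fun x => ⟨idx x, (hD _).mem_nhds (hidx x)⟩)
      fun i => (hf_cont i).continuousOn.congr fun x hx => ?_
    simp only [idx_eq hx]
  · ext x
    exact hf_red _ x (hidx x)

theorem wadgeLe_compl_of_wadgeLt {A B : Set Z} (hWadge : WadgeLe B A ∨ WadgeLe Aᶜ B)
    (hlt : WadgeLt A B) : WadgeLe Aᶜ B :=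
  hWadge.resolve_left hlt.2

end

theorem stmt19_general {Z : Type*} [TopologicalSpace Z] [PolishSpace Z]
    (hzd : ZeroDimensional Z)
    (hWadge : ∀ A B : Set Z, WadgeLe A B ∨ WadgeLe Bᶜ A)
    (A : Set Z) (𝒰 : Set (Set Z)) (hopen : ∀ U ∈ 𝒰, IsOpen U)
    (hcover : ⋃₀ 𝒰 = univ) (hlt : ∀ U ∈ 𝒰, WadgeLt (A ∩ U) A) :
    WadgeLe Aᶜ A := by
  obtain ⟨hne, b, hb_clopen, hb⟩ := hzd
  obtain ⟨V, hV_clopen, hV_sub, hV_cover⟩ :=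
    exists_clopen_seq_cover_subordinate hb_clopen hb hopen hcover
  refine wadgeLe_of_disjoint_open_cover (isOpen_disjointed_of_isClopen hV_clopen)
    (disjoint_disjointed V) (iUnion_disjointed.trans hV_cover) fun n => ?_
  obtain ⟨U, hU, hVU⟩ := hV_sub n
  obtain ⟨f, hf, hfA⟩ := wadgeLe_compl_of_wadgeLt (hWadge A (A ∩ U)) (hlt U hU)
  refine ⟨f, hf, fun x hx => ?_⟩
  have hxU : x ∈ U := hVU (disjointed_subset V n hx)
  rw [← mem_preimage, ← hfA]
  simp [hxU]

/-- Let `Z` be a zero-dimensional Polish space on which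
Wadge reduction is well-founded and satisfies Wadge's Lemma (for all `A, B`,
either `A ≤ B` or `Z \ B ≤ A`). If `A ⊆ Z` and `𝒰` is an open cover of `Z`
with `A ∩ U < A` for every `U ∈ 𝒰`, then `A` is selfdual: `Z \ A ≤ A`. -/
theorem stmt19 {Z : Type*} [TopologicalSpace Z] [PolishSpace Z]
    (hzd : ZeroDimensional Z)
    (hwf : WellFounded (fun A B : Set Z => WadgeLt A B))
    (hWadge : ∀ A B : Set Z, WadgeLe A B ∨ WadgeLe Bᶜ A)
    (A : Set Z) (𝒰 : Set (Set Z)) (hopen : ∀ U ∈ 𝒰, IsOpen U)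
    (hcover : ⋃₀ 𝒰 = univ) (hlt : ∀ U ∈ 𝒰, WadgeLt (A ∩ U) A) :
    WadgeLe Aᶜ A :=
  stmt19_general hzd hWadge A 𝒰 hopen hcover hlt
end
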